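/- arXiv:1606.03573 — 5 statements merged into one kernel-verified Lean document; each statement's English description precedes it below -/
import Mathlib

section
/- In the shorthand of the paper: ∑_{j=1}^b g(x_k, v^C_j) Ω_{a+j} = g(x_k, v̄^C)/g(x_k, v̄^B) - 1, where Ω_{a+j} = (1/g(v^C_j, v̄^B)) ∏_{k≠j} g(v^C_j, v^C_k), g(u,v)=c/(u-v), and g of a set denotes the product over its elements. -/
/-!
With `P = ∏ (X - v^B_l)` and `Q = ∏ (X - v^C_j)`, the right-hand side is `P(x)/Q(x) - 1` and the
`j`-th summand is `P(v^C_j) / ((x - v^C_j) Q'(v^C_j))`, the `c`'s cancelling. Since `P - Q` has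
degree `< b` and equals `P` at the nodes `v^C_j`, it is its own Lagrange interpolant there; the
barycentric form of that interpolant, evaluated at `x` and divided by `Q(x)`, is the identity.
-/

open Finset Polynomial Lagrange

noncomputable def gg (c u v : ℂ) : ℂ := c / (u - v)

theorem Lagrange.sum_nodalWeight_mul_inv_sub_mul_eval {F ι : Type*} [Field F] [DecidableEq ι]
    {s : Finset ι} {v : ι → F} (hvs : Set.InjOn v s) {P : F[X]} (hP : P.Monic)
    (hdeg : P.natDegree = #s) {x : F} (hx : ∀ i ∈ s, x ≠ v i) :
    ∑ i ∈ s, nodalWeight s v i * (x - v i)⁻¹ * P.eval (v i) =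
      P.eval x / (nodal s v).eval x - 1 := by
  have hPdeg : P.degree = #s := by rw [degree_eq_natDegree hP.ne_zero, hdeg]
  have hlt : (P - nodal s v).degree < #s := hPdeg ▸ degree_sub_lt_left
    (hPdeg.trans degree_nodal.symm) hP.ne_zero (by rw [hP.leadingCoeff, nodal_monic.leadingCoeff])
  have hinterp := eq_interpolate_of_eval_eq (r := fun i => P.eval (v i)) hvs hlt
    fun i hi => by rw [eval_sub, eval_nodal_at_node hi, sub_zero]
  have heval := congrArg (eval x) hinterp
  rw [eval_sub, eval_interpolate_not_at_node _ hx] at heval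
  have hN : (nodal s v).eval x ≠ 0 := eval_nodal_not_at_node hx
  rw [eq_sub_iff_add_eq, eq_div_iff hN]
  linear_combination -heval

theorem prod_gg (c y : ℂ) {ι : Type*} (s : Finset ι) (w : ι → ℂ) :
    ∏ i ∈ s, gg c y (w i) = c ^ #s * (∏ i ∈ s, (y - w i))⁻¹ := by
  simp only [gg, div_eq_mul_inv, prod_mul_distrib, prod_const, prod_inv_distrib]

/-- The coefficient `Ω_{a+j}` of the paper. -/
noncomputable def Omega (c : ℂ) {ι : Type*} [Fintype ι] [DecidableEq ι] (vB vC : ι → ℂ) (j : ι) :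
    ℂ :=
  (1 / ∏ l, gg c (vC j) (vB l)) * ∏ k ∈ univ.erase j, gg c (vC j) (vC k)

theorem gg_mul_Omega {c : ℂ} (hc : c ≠ 0) {ι : Type*} [Fintype ι] [DecidableEq ι]
    (vB vC : ι → ℂ) (x : ℂ) (j : ι) :
    gg c x (vC j) * Omega c vB vC j =
      nodalWeight univ vC j * (x - vC j)⁻¹ * (nodal univ vB).eval (vC j) := by
  rw [Omega, prod_gg, prod_gg, eval_nodal, nodalWeight, prod_inv_distrib, gg,
    ← card_erase_add_one (mem_univ j)]
  field_simp
  ring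

theorem sum_g_Omega_general (c : ℂ) (hc : c ≠ 0) (b : ℕ) (x : ℂ)
    (vB vC : Fin b → ℂ) (hvC : Function.Injective vC)
    (hxC : ∀ j, x ≠ vC j) :
    ∑ j, gg c x (vC j) *
        ((1 / ∏ l, gg c (vC j) (vB l)) * ∏ k ∈ univ.erase j, gg c (vC j) (vC k)) =
      (∏ l, gg c x (vC l)) / (∏ l, gg c x (vB l)) - 1 := by
  calc ∑ j, gg c x (vC j) * Omega c vB vC j
      = ∑ j, nodalWeight univ vC j * (x - vC j)⁻¹ * (nodal univ vB).eval (vC j) :=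
        sum_congr rfl fun j _ => gg_mul_Omega hc vB vC x j
    _ = (nodal univ vB).eval x / (nodal univ vC).eval x - 1 :=
        sum_nodalWeight_mul_inv_sub_mul_eval hvC.injOn nodal_monic natDegree_nodal
          fun j _ => hxC j
    _ = (∏ l, gg c x (vC l)) / (∏ l, gg c x (vB l)) - 1 := by
        rw [prod_gg, prod_gg, ← eval_nodal, ← eval_nodal,
          mul_div_mul_left _ _ (pow_ne_zero _ hc), inv_div_inv]

theorem sum_g_Omega (c : ℂ) (hc : c ≠ 0) (b : ℕ) (hb : 1 ≤ b) (x : ℂ)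
    (vB vC : Fin b → ℂ) (hvC : Function.Injective vC)
    (hxC : ∀ j, x ≠ vC j) (hxB : ∀ l, x ≠ vB l) (hCB : ∀ j l, vC j ≠ vB l) :
    ∑ j, gg c x (vC j) *
        ((1 / ∏ l, gg c (vC j) (vB l)) * ∏ k ∈ univ.erase j, gg c (vC j) (vC k)) =
      (∏ l, gg c x (vC l)) / (∏ l, gg c x (vB l)) - 1 :=
  sum_g_Omega_general c hc b x vB vC hvC hxC
end

section
/- With h(u,v)=(u-v+c)/c: ∑_{j=1}^b Ω_{a+j}/h(v^C_j, x_k) = 1 - h(v̄^B, x_k)/h(v̄^C, x_k), where Ω_{a+j} = (1/g(v^C_j, v̄^B)) ∏_{l≠j} g(v^C_j, v^C_l) and h of a set is the product over its elements. -/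
/-!
With `y = x - c` we have `h(v, x) = (v - y) / c`, so after clearing the powers of `c` the claim
is the partial-fraction identity
`∑ⱼ P(v^C_j) / (Q'(v^C_j) (v^C_j - y)) = 1 - P(y) / Q(y)` for the monic polynomials
`P = ∏ (X - v^B_l)` and `Q = ∏ (X - v^C_l)` of the same degree `b`.
It holds because `P - Q` has degree `< b`, hence equals its Lagrange interpolant on the roots
of `Q`, where it takes the values `P(v^C_j)`; evaluating the barycentric form of that
interpolant at `y` and dividing by `Q(y)` gives the identity.
-/

open Finset

noncomputable def hh (c u v : ℂ) : ℂ := (u - v + c) / c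

open Polynomial Lagrange

theorem Lagrange.sum_nodalWeight_mul_eval_div_sub {F ι : Type*} [Field F] [DecidableEq ι]
    {s : Finset ι} {v : ι → F} (hvs : Set.InjOn v s) {p : F[X]} (hp : p.Monic)
    (hdeg : p.natDegree = #s) {x : F} (hx : ∀ i ∈ s, x ≠ v i) :
    ∑ i ∈ s, nodalWeight s v i * p.eval (v i) / (v i - x) =
      1 - p.eval x / (nodal s v).eval x := by
  have hlt : (p - nodal s v).degree < #s := by
    rw [← degree_nodal (v := v)]
    refine degree_sub_lt_right ?_ nodal_ne_zero (hp.trans nodal_monic.symm)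
    rw [degree_eq_natDegree hp.ne_zero, hdeg, degree_nodal]
  have hinterp := congrArg (eval x) (eq_interpolate_of_eval_eq (fun i => p.eval (v i)) hvs hlt
    fun i hi => by rw [eval_sub, eval_nodal_at_node hi, sub_zero])
  rw [eval_interpolate_not_at_node _ hx, eval_sub] at hinterp
  have hN : (nodal s v).eval x ≠ 0 := eval_nodal_not_at_node hx
  rw [← neg_sub, div_sub_one hN, hinterp, mul_div_cancel_left₀ _ hN, ← sum_neg_distrib]
  refine sum_congr rfl fun i _ => ?_
  rw [← neg_sub x, div_neg, div_eq_mul_inv, mul_right_comm]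

theorem one_div_prod_gg_mul_prod_gg_div_hh {ι : Type*} [Fintype ι] [DecidableEq ι] {c : ℂ}
    (hc : c ≠ 0) (vB vC : ι → ℂ) (x : ℂ) (j : ι) :
    ((1 / ∏ l, gg c (vC j) (vB l)) * ∏ l ∈ univ.erase j, gg c (vC j) (vC l)) / hh c (vC j) x =
      nodalWeight univ vC j * (nodal univ vB).eval (vC j) / (vC j - (x - c)) := by
  have hcj : ∏ _l ∈ univ.erase j, c ≠ 0 := prod_ne_zero_iff.2 fun _ _ => hc
  rw [hh, show vC j - x + c = vC j - (x - c) by ring, eval_nodal, nodalWeight]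
  simp only [gg, div_eq_mul_inv c, prod_mul_distrib, prod_inv_distrib,
    ← mul_prod_erase univ (fun _ => c) (mem_univ j)]
  field_simp

theorem hh_eq_sub_div_neg {c : ℂ} (hc : c ≠ 0) (u x : ℂ) : hh c u x = (x - c - u) / -c := by
  rw [hh, div_eq_div_iff hc (neg_ne_zero.2 hc)]
  ring

theorem prod_hh_div_prod_hh {ι : Type*} [Fintype ι] {c : ℂ} (hc : c ≠ 0) (vB vC : ι → ℂ)
    (x : ℂ) :
    (∏ l, hh c (vB l) x) / ∏ l, hh c (vC l) x =
      (nodal univ vB).eval (x - c) / (nodal univ vC).eval (x - c) := by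
  simp only [hh_eq_sub_div_neg hc, prod_div_distrib, eval_nodal]
  exact div_div_div_cancel_right₀ (prod_ne_zero_iff.2 fun _ _ => neg_ne_zero.2 hc) _ _

theorem sum_invh_Omega_general (c : ℂ) (hc : c ≠ 0) (b : ℕ) (x : ℂ)
    (vB vC : Fin b → ℂ) (hvC : Function.Injective vC)
    (hhC : ∀ l, vC l - x + c ≠ 0) :
    ∑ j, ((1 / ∏ l, gg c (vC j) (vB l)) * ∏ l ∈ univ.erase j, gg c (vC j) (vC l)) /
        hh c (vC j) x =
      1 - (∏ l, hh c (vB l) x) / (∏ l, hh c (vC l) x) := by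
  have hx : ∀ l ∈ univ, x - c ≠ vC l := fun l _ h => hhC l (by rw [← h]; ring)
  simp only [one_div_prod_gg_mul_prod_gg_div_hh hc, prod_hh_div_prod_hh hc]
  exact sum_nodalWeight_mul_eval_div_sub hvC.injOn nodal_monic natDegree_nodal hx

theorem sum_invh_Omega (c : ℂ) (hc : c ≠ 0) (b : ℕ) (hb : 1 ≤ b) (x : ℂ)
    (vB vC : Fin b → ℂ) (hvC : Function.Injective vC)
    (hCB : ∀ j l, vC j ≠ vB l)
    (hhC : ∀ l, vC l - x + c ≠ 0) :
    ∑ j, ((1 / ∏ l, gg c (vC j) (vB l)) * ∏ l ∈ univ.erase j, gg c (vC j) (vC l)) /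
        hh c (vC j) x =
      1 - (∏ l, hh c (vB l) x) / (∏ l, hh c (vC l) x) :=
  sum_invh_Omega_general c hc b x vB vC hvC hhC
end

section
/- With t(u,v)=c^2/((u-v)(u-v+c)): ∑_{j=1}^a t(x_k, u^C_j) Ω_j = g(x_k, ū^C)/g(x_k, ū^B) - h(x_k, ū^B)/h(x_k, ū^C), where Ω_j = (1/g(u^C_j, ū^B)) ∏_{l≠j} g(u^C_j, u^C_l). -/
/-! Both ratios on the right are values, at `y = x` and `y = x + c`, of
`R y = ∏ l, (y - uB l) / ∏ l, (y - uC l)`. Lagrange interpolation of the numerator minus the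
denominator (a polynomial of degree `< a`) at the nodes `uC j` gives the partial fraction expansion
`R y = 1 + ∑ j, c Ω_j / (y - uC j)`, and `c ((x - uC j)⁻¹ - (x + c - uC j)⁻¹) = t(x, uC j)`. -/

open Finset

noncomputable def tt (c u v : ℂ) : ℂ := c ^ 2 / ((u - v) * (u - v + c))

open Polynomial Lagrange

theorem degree_nodal_sub_nodal_lt {R ι : Type*} [CommRing R] [Nontrivial R] (s : Finset ι)
    (v w : ι → R) : (nodal s w - nodal s v).degree < #s := by
  rw [← degree_nodal (s := s) (v := w)]
  exact degree_sub_lt_left (by rw [degree_nodal, degree_nodal]) nodal_ne_zero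
    (by rw [nodal_monic.leadingCoeff, nodal_monic.leadingCoeff])

theorem eval_nodal_div_eval_nodal {F ι : Type*} [Field F] [DecidableEq ι] {s : Finset ι}
    {v : ι → F} (hvs : Set.InjOn v s) (w : ι → F) {y : F} (hy : ∀ i ∈ s, y ≠ v i) :
    (nodal s w).eval y / (nodal s v).eval y =
      1 + ∑ i ∈ s, nodalWeight s v i * (y - v i)⁻¹ * (nodal s w).eval (v i) := by
  have hinterp : nodal s w - nodal s v = interpolate s v fun i => (nodal s w).eval (v i) :=
    eq_interpolate_of_eval_eq _ hvs (degree_nodal_sub_nodal_lt s v w) fun i hi => by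
      rw [eval_sub, eval_nodal_at_node hi, sub_zero]
  have heval := congrArg (eval y) hinterp
  rw [eval_sub, eval_interpolate_not_at_node _ hy, sub_eq_iff_eq_add'] at heval
  rw [div_eq_iff (eval_nodal_not_at_node hy), heval]
  ring

section ProdDiv

variable {G₀ ι : Type*} [CommGroupWithZero G₀] {c : G₀} (s : Finset ι) (f g : ι → G₀)

theorem prod_const_div_div_prod_const_div (hc : c ≠ 0) :
    (∏ i ∈ s, c / f i) / ∏ i ∈ s, c / g i = (∏ i ∈ s, g i) / ∏ i ∈ s, f i := by
  simp only [prod_div_distrib, prod_const]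
  exact div_div_div_cancel_left' _ _ (pow_ne_zero _ hc)

theorem prod_div_const_div_prod_div_const (hc : c ≠ 0) :
    (∏ i ∈ s, f i / c) / ∏ i ∈ s, g i / c = (∏ i ∈ s, f i) / ∏ i ∈ s, g i := by
  simp only [prod_div_distrib, prod_const]
  exact div_div_div_cancel_right₀ (pow_ne_zero _ hc) _ _

end ProdDiv

section

variable {c : ℂ} {ι : Type*} (s : Finset ι) (v w : ι → ℂ)

theorem prod_gg_div_prod_gg (hc : c ≠ 0) (x : ℂ) :
    (∏ l ∈ s, gg c x (v l)) / ∏ l ∈ s, gg c x (w l) = (nodal s w).eval x / (nodal s v).eval x := by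
  simp only [gg, eval_nodal]
  exact prod_const_div_div_prod_const_div s _ _ hc

theorem prod_hh_div_prod_hh_s13 (hc : c ≠ 0) (x : ℂ) :
    (∏ l ∈ s, hh c x (w l)) / ∏ l ∈ s, hh c x (v l) =
      (nodal s w).eval (x + c) / (nodal s v).eval (x + c) := by
  simp only [hh, eval_nodal, sub_add_eq_add_sub]
  exact prod_div_const_div_prod_div_const s _ _ hc

theorem one_div_prod_gg_mul_prod_erase_gg [DecidableEq ι] (hc : c ≠ 0) {j : ι} (hj : j ∈ s) :
    (1 / ∏ l ∈ s, gg c (v j) (w l)) * ∏ l ∈ s.erase j, gg c (v j) (v l) =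
      c⁻¹ * ((nodal s w).eval (v j) * nodalWeight s v j) := by
  obtain ⟨n, hn⟩ : ∃ n, #s = n + 1 := Nat.exists_eq_add_one.mpr (card_pos.mpr ⟨j, hj⟩)
  simp only [gg, prod_div_distrib, prod_const, card_erase_of_mem hj, hn, Nat.add_sub_cancel,
    eval_nodal, nodalWeight, prod_inv_distrib]
  field_simp
  ring

end

theorem tt_mul_inv_eq_inv_sub_inv (c u v : ℂ) (h1 : u - v ≠ 0) (h2 : u - v + c ≠ 0) :
    tt c u v * c⁻¹ = (u - v)⁻¹ - (u + c - v)⁻¹ := by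
  rw [tt, add_sub_right_comm]
  field_simp
  ring

theorem sum_t_Omega'_general (c : ℂ) (hc : c ≠ 0) (a : ℕ) (x : ℂ)
    (uB uC : Fin a → ℂ) (huC : Function.Injective uC)
    (h1 : ∀ j, x ≠ uC j) (h2 : ∀ j, x - uC j + c ≠ 0) :
    ∑ j, tt c x (uC j) *
        ((1 / ∏ l, gg c (uC j) (uB l)) * ∏ l ∈ univ.erase j, gg c (uC j) (uC l)) =
      (∏ l, gg c x (uC l)) / (∏ l, gg c x (uB l)) -
        (∏ l, hh c x (uB l)) / (∏ l, hh c x (uC l)) := by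
  have hx : ∀ j ∈ univ, x ≠ uC j := fun j _ => h1 j
  have hxc : ∀ j ∈ univ, x + c ≠ uC j := fun j _ hj => h2 j (by rw [← hj]; ring)
  rw [prod_gg_div_prod_gg _ _ _ hc, prod_hh_div_prod_hh_s13 _ _ _ hc,
    eval_nodal_div_eval_nodal huC.injOn _ hx, eval_nodal_div_eval_nodal huC.injOn _ hxc,
    add_sub_add_left_eq_sub, ← sum_sub_distrib]
  refine sum_congr rfl fun j hj => ?_
  rw [one_div_prod_gg_mul_prod_erase_gg _ _ _ hc hj, ← mul_assoc,
    tt_mul_inv_eq_inv_sub_inv _ _ _ (sub_ne_zero.mpr (h1 j)) (h2 j)]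
  ring

theorem sum_t_Omega' (c : ℂ) (hc : c ≠ 0) (a : ℕ) (ha : 1 ≤ a) (x : ℂ)
    (uB uC : Fin a → ℂ) (huC : Function.Injective uC)
    (h1 : ∀ j, x ≠ uC j) (h2 : ∀ j, x - uC j + c ≠ 0)
    (h3 : ∀ l, x ≠ uB l) (h4 : ∀ j l, uC j ≠ uB l) :
    ∑ j, tt c x (uC j) *
        ((1 / ∏ l, gg c (uC j) (uB l)) * ∏ l ∈ univ.erase j, gg c (uC j) (uC l)) =
      (∏ l, gg c x (uC l)) / (∏ l, gg c x (uB l)) -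
        (∏ l, hh c x (uB l)) / (∏ l, hh c x (uC l)) :=
  sum_t_Omega'_general c hc a x uB uC huC h1 h2
end

section
/- Laplace expansion over partitions: for n×n matrices A and B with entries A(u_j,v_k), B(u_j,v_k), det(A+B) = ∑ (-1)^{[P_u]+[P_v]} det(A restricted to rows ū_I and columns v̄_I) · det(B restricted to rows ū_II and columns v̄_II), where the sum is over all pairs of subsets ū_I ⊆ {u_1,…,u_n}, v̄_I ⊆ {v_1,…,v_n} with |ū_I| = |v̄_I|, the complements are ū_II, v̄_II, and [P_u]+[P_v] is the parity of the permutation mapping the index sequence of (ū_I, ū_II) to that of (v̄_I, v̄_II). -/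
/-!
By multilinearity in the rows, `det (A + B) = ∑_S det M_S`, where `M_S` takes its rows in `S`
from `A` and the others from `B`, so it suffices to expand `det M` along a set `S` of rows. The
terms of the Leibniz formula whose permutation matches `S` with the column set `T` add up to the
determinant of `M` with every entry outside `S × T ∪ Sᶜ × Tᶜ` replaced by `0`. There are none
unless `|S| = |T|`, and then listing the rows as `S, Sᶜ` and the columns as `T, Tᶜ` makes that
matrix block diagonal, at the cost of the signs of the two sorting permutations. The inversions
of the permutation listing `X = {x₀ < ⋯ < x_{k-1}}` before `Xᶜ` are the pairs `y < xᵢ` with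
`y ∉ X`, `xᵢ - i` of them for each `i`, so its sign is `(-1) ^ (∑ X - ∑_{i<k} i)`; the
correction `∑_{i<k} i` cancels between rows and columns.
-/

open Finset Equiv Matrix

namespace Finset

theorem card_filter_lt_orderEmbOfFin {α : Type*} [LinearOrder α] (s : Finset α) {k : ℕ}
    (h : #s = k) (i : Fin k) : #{x ∈ s | x < s.orderEmbOfFin h i} = i := by
  have : {x ∈ s | x < s.orderEmbOfFin h i} = (Iio i).map (s.orderEmbOfFin h).toEmbedding := by
    ext x
    simp only [mem_filter, mem_map, mem_Iio, RelEmbedding.coe_toEmbedding]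
    constructor
    · rintro ⟨hx, hlt⟩
      obtain ⟨j, rfl⟩ : x ∈ Set.range (s.orderEmbOfFin h) := by rwa [range_orderEmbOfFin]
      exact ⟨j, (s.orderEmbOfFin h).lt_iff_lt.1 hlt, rfl⟩
    · rintro ⟨j, hj, rfl⟩
      exact ⟨orderEmbOfFin_mem s h j, (s.orderEmbOfFin h).lt_iff_lt.2 hj⟩
  rw [this, card_map, Fin.card_Iio]

theorem orderEmbOfFin_compl_notMem {α : Type*} [Fintype α] [DecidableEq α] [LinearOrder α]
    (s : Finset α) {k : ℕ} (h : #sᶜ = k) (i : Fin k) : sᶜ.orderEmbOfFin h i ∉ s :=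
  mem_compl.1 (orderEmbOfFin_mem _ _ _)

section Shuffle

variable {n k m : ℕ} (X : Finset (Fin n)) (hk : #X = k) (hm : #Xᶜ = m)

/-- Sends the elements of `X`, in increasing order, to `0, …, k - 1`, and those of `Xᶜ` to
`k, …, n - 1`. -/
def shufflePerm : Perm (Fin n) :=
  (finSumEquivOfFinset hk hm).symm.trans <| finSumFinEquiv.trans <| finCongr <| by
    rw [← hk, ← hm, card_add_card_compl, Fintype.card_fin]

@[simp]
theorem val_shufflePerm_orderEmbOfFin (i : Fin k) :
    (X.shufflePerm hk hm (X.orderEmbOfFin hk i) : ℕ) = i := by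
  rw [shufflePerm, trans_apply, ← finSumEquivOfFinset_inl hk hm, symm_apply_apply]
  simp

@[simp]
theorem val_shufflePerm_compl_orderEmbOfFin (j : Fin m) :
    (X.shufflePerm hk hm (Xᶜ.orderEmbOfFin hm j) : ℕ) = k + j := by
  rw [shufflePerm, trans_apply, ← finSumEquivOfFinset_inr hk hm, symm_apply_apply]
  simp

theorem shufflePerm_lt_shufflePerm_iff {x y : Fin n} (hxy : x < y) :
    X.shufflePerm hk hm x < X.shufflePerm hk hm y ↔ x ∈ X ∨ y ∉ X := by
  obtain ⟨a, rfl⟩ := (finSumEquivOfFinset hk hm).surjective x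
  obtain ⟨b, rfl⟩ := (finSumEquivOfFinset hk hm).surjective y
  rcases a with i | i <;> rcases b with j | j <;>
    simp only [finSumEquivOfFinset_inl, finSumEquivOfFinset_inr, OrderEmbedding.lt_iff_lt]
      at hxy ⊢ <;>
    simp [Fin.lt_def, orderEmbOfFin_mem, orderEmbOfFin_compl_notMem, hxy] <;> omega

theorem sign_shufflePerm :
    Perm.sign (X.shufflePerm hk hm) = (-1) ^ (∑ x ∈ X, (x : ℕ) + ∑ i ∈ range k, i) := by
  have hrow (y : Fin n) :
      ∏ x ∈ Iio y, (if X.shufflePerm hk hm x < X.shufflePerm hk hm y then 1 else -1 : ℤˣ) =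
        if y ∈ X then (-1) ^ #{x ∈ Iio y | x ∉ X} else 1 := by
    refine (prod_congr rfl fun x hx => ?_).trans (?_ : ∏ x ∈ Iio y,
      (if x ∈ X ∨ y ∉ X then 1 else -1 : ℤˣ) = _)
    · simp only [shufflePerm_lt_shufflePerm_iff X hk hm (mem_Iio.1 hx)]
    · split_ifs with hy <;> simp [hy, prod_ite]
  have hrank : ∑ y ∈ X, #{x ∈ Iio y | x ∈ X} = ∑ i ∈ range k, i := calc
    _ = ∑ i : Fin k, #{x ∈ X | x < X.orderEmbOfFin hk i} := by
      have := sum_map univ (X.orderEmbOfFin hk).toEmbedding fun y => #{x ∈ Iio y | x ∈ X}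
      simp only [map_orderEmbOfFin_univ] at this
      rw [this]
      congr! 2 with i
      ext x
      simp [and_comm]
    _ = ∑ i ∈ range k, i := by
      simp_rw [card_filter_lt_orderEmbOfFin]
      exact Fin.sum_univ_eq_sum_range id k
  have hcount : ∑ y ∈ X, #{x ∈ Iio y | x ∉ X} + ∑ i ∈ range k, i = ∑ x ∈ X, (x : ℕ) := by
    rw [← hrank, ← sum_add_distrib]
    refine sum_congr rfl fun y _ => ?_
    rw [add_comm, card_filter_add_card_filter_not, Fin.card_Iio]
  rw [Perm.sign_eq_prod_prod_Iio, Fintype.prod_congr _ _ hrow, prod_ite_mem, univ_inter,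
    prod_pow_eq_pow_sum, ← hcount, add_assoc, ← two_mul, pow_add, pow_mul, neg_one_sq, one_pow,
    mul_one]

end Shuffle

end Finset

namespace Matrix

variable {α ι R : Type*} [Fintype α] [DecidableEq α] [CommRing R]

theorem det_add_eq_sum_det_piecewise (A B : Matrix α α R) :
    (A + B).det = ∑ S : Finset α, det (of (S.piecewise A B)) :=
  detRowAlternating.map_add_univ A B

theorem det_submatrix_equiv_equiv [Fintype ι] [DecidableEq ι] (e f : ι ≃ α)
    (M : Matrix α α R) : (M.submatrix e f).det = Perm.sign (f.symm.trans e) * M.det := by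
  have : M.submatrix e f = (M.submatrix (f.symm.trans e) id).submatrix f f := by ext; simp
  rw [this, det_submatrix_equiv_self, det_permute]

def blockMask (S T : Finset α) (M : Matrix α α R) : Matrix α α R :=
  of fun i j => if (i ∈ S ↔ j ∈ T) then M i j else 0

theorem prod_blockMask_perm (S T : Finset α) (M : Matrix α α R) (σ : Perm α) :
    ∏ i, blockMask S T M (σ i) i =
      if T = S.map σ.symm.toEmbedding then ∏ i, M (σ i) i else 0 := by
  split_ifs with hT
  · refine prod_congr rfl fun i _ => ?_
    simp [blockMask, hT, mem_map_equiv]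
  · obtain ⟨i, hi⟩ : ∃ i, ¬(σ i ∈ S ↔ i ∈ T) := by
      by_contra! h
      exact hT (by ext i; simp [mem_map_equiv, h])
    exact prod_eq_zero (mem_univ i) (by simp [blockMask, hi])

theorem det_blockMask (S T : Finset α) (M : Matrix α α R) :
    (blockMask S T M).det =
      ∑ σ : Perm α, if T = S.map σ.symm.toEmbedding then Perm.sign σ * ∏ i, M (σ i) i else 0 := by
  simp_rw [det_apply', prod_blockMask_perm, mul_ite, mul_zero]

theorem det_eq_sum_det_blockMask (S : Finset α) (M : Matrix α α R) :
    M.det = ∑ T, (blockMask S T M).det := by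
  simp_rw [det_blockMask]
  rw [sum_comm, det_apply']
  simp

theorem det_blockMask_of_card_ne {S T : Finset α} (h : #S ≠ #T) (M : Matrix α α R) :
    (blockMask S T M).det = 0 := by
  rw [det_blockMask]
  refine sum_eq_zero fun σ _ => if_neg ?_
  rintro rfl
  exact h (card_map _).symm

section Laplace

variable {n : ℕ}

theorem det_blockMask_of_card_eq (M : Matrix (Fin n) (Fin n) R) {S T : Finset (Fin n)}
    (h : #S = #T) :
    (blockMask S T M).det =
      (-1) ^ (∑ i ∈ S, (i : ℕ) + ∑ j ∈ T, (j : ℕ)) *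
        det (of fun i j : Fin #S => M (S.orderEmbOfFin rfl i) (T.orderEmbOfFin h.symm j)) *
        det (of fun i j : Fin #Sᶜ => M (Sᶜ.orderEmbOfFin rfl i)
          (Tᶜ.orderEmbOfFin (by rw [card_compl, card_compl, h]) j)) := by
  have hc : #Tᶜ = #Sᶜ := by rw [card_compl, card_compl, h]
  set eS := finSumEquivOfFinset (rfl : #S = #S) (rfl : #Sᶜ = #Sᶜ)
  set eT := finSumEquivOfFinset h.symm hc
  have hblocks : (blockMask S T M).submatrix eS eT =
      fromBlocks (of fun i j => M (S.orderEmbOfFin rfl i) (T.orderEmbOfFin h.symm j)) 0 0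
        (of fun i j => M (Sᶜ.orderEmbOfFin rfl i) (Tᶜ.orderEmbOfFin hc j)) := by
    ext (i | i) (j | j) <;> simp [blockMask, eS, eT, orderEmbOfFin_mem, orderEmbOfFin_compl_notMem]
  have hsign : Perm.sign (eT.symm.trans eS) = (-1) ^ (∑ i ∈ S, (i : ℕ) + ∑ j ∈ T, (j : ℕ)) := by
    have : eT.symm.trans eS = (T.shufflePerm h.symm hc).trans (S.shufflePerm rfl rfl).symm := by
      ext x; simp [shufflePerm, eS, eT]
    rw [this, Perm.sign_trans, Perm.sign_symm, sign_shufflePerm, sign_shufflePerm, ← pow_add,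
      show ∑ i ∈ S, (i : ℕ) + ∑ i ∈ range #S, i + (∑ j ∈ T, (j : ℕ) + ∑ i ∈ range #S, i) =
        ∑ i ∈ S, (i : ℕ) + ∑ j ∈ T, (j : ℕ) + 2 * ∑ i ∈ range #S, i by ring,
      pow_add, pow_mul, neg_one_sq, one_pow, mul_one]
  have hdet := det_submatrix_equiv_equiv eS eT (blockMask S T M)
  rw [hblocks, det_fromBlocks_zero₂₁, hsign] at hdet
  rw [mul_assoc, hdet]
  push_cast
  rw [← mul_assoc, ← mul_pow, neg_one_mul, neg_neg, one_pow, one_mul]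

theorem det_eq_sum_laplace (M : Matrix (Fin n) (Fin n) R) (S : Finset (Fin n)) :
    M.det = ∑ T : Finset (Fin n),
      if h : #S = #T then
        (-1) ^ (∑ i ∈ S, (i : ℕ) + ∑ j ∈ T, (j : ℕ)) *
          det (of fun i j : Fin #S => M (S.orderEmbOfFin rfl i) (T.orderEmbOfFin h.symm j)) *
          det (of fun i j : Fin #Sᶜ => M (Sᶜ.orderEmbOfFin rfl i)
            (Tᶜ.orderEmbOfFin (by rw [card_compl, card_compl, h]) j))
      else 0 := by
  rw [det_eq_sum_det_blockMask S]
  refine sum_congr rfl fun T _ => ?_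
  split_ifs with h
  · exact det_blockMask_of_card_eq M h
  · exact det_blockMask_of_card_ne h M

end Laplace

end Matrix

theorem laplace_expansion (n : ℕ) (R : Type*) [CommRing R]
    (A B : Matrix (Fin n) (Fin n) R) :
    (A + B).det =
      ∑ S : Finset (Fin n), ∑ T : Finset (Fin n),
        if h : S.card = T.card then
          (-1 : R) ^ ((∑ i ∈ S, (i : ℕ)) + ∑ j ∈ T, (j : ℕ)) *
          Matrix.det (Matrix.of fun (i j : Fin S.card) =>
            A (S.orderEmbOfFin rfl i) (T.orderEmbOfFin h.symm j)) *
          Matrix.det (Matrix.of fun (i j : Fin Sᶜ.card) =>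
            B (Sᶜ.orderEmbOfFin rfl i)
              (Tᶜ.orderEmbOfFin (by rw [Finset.card_compl, Finset.card_compl, h]) j))
        else 0 := by
  rw [det_add_eq_sum_det_piecewise]
  refine sum_congr rfl fun S _ => ?_
  rw [det_eq_sum_laplace _ S]
  refine sum_congr rfl fun T _ => ?_
  split_ifs with h
  · congr 3 <;> ext i j
    · simp only [of_apply]
      exact congrFun (piecewise_eq_of_mem _ _ _ (orderEmbOfFin_mem S rfl i)) _
    · simp only [of_apply]
      exact congrFun (piecewise_eq_of_notMem _ _ _ (orderEmbOfFin_compl_notMem S rfl i)) _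
  · rfl
end

section
/- Lemma (sum over partitions of products of g): for sets of complex variables ū (size m1), v̄ (size m2), w̄ (size m1+m2), ∑ g(w̄_I, ū) g(w̄_II, v̄) g(w̄_II, w̄_I) = g(w̄, ū) g(w̄, v̄) / g(ū, v̄), where the sum is over all partitions of w̄ into subsets w̄_I of size m1 and w̄_II of size m2, g(u,v)=c/(u-v), and g applied to sets means the double product over all pairs. -/
/-!
Writing `g = c · (x - y)⁻¹`, every term of the sum carries the same power of `c`, and after
multiplying through by `∏ (w - u) ∏ (w - v)` the claim becomes the polynomial identity
`∑_S ∏_{S × v̄} (w - v) ∏_{S' × ū} (w - u) / ∏_{S' × S} (w - w') = ∏_{ū × v̄} (u - v)`,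
where `S' = w̄ \ S`. This is proved by induction on `#v̄`: both sides are polynomials of degree
`≤ #ū` in the last `v`; at `v = w_p` the terms with `p ∈ S` vanish and the others reduce to the
identity for `w̄ \ {w_p}` times `∏ (u - w_p)`, so the two polynomials agree at `#ū + #v̄ > #ū`
points.
-/

open Finset

open Polynomial

section

variable {K ι κ α : Type*} [Field K] [Fintype ι] [DecidableEq α]

def partitionTerm (u : ι → K) (v : κ → K) (s : Finset κ) (w : α → K) (A S : Finset α) : K :=
  (∏ i ∈ S, ∏ k ∈ s, (w i - v k)) * (∏ i ∈ A \ S, ∏ j, (w i - u j)) *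
    ∏ i ∈ A \ S, ∏ i' ∈ S, (w i - w i')⁻¹

lemma partitionTerm_insert [DecidableEq κ] (u : ι → K) {v : κ → K} {s : Finset κ} {a : κ}
    (ha : a ∉ s) (w : α → K) (A S : Finset α) :
    partitionTerm u v (insert a s) w A S =
      partitionTerm u v s w A S * ∏ i ∈ S, (w i - v a) := by
  simp only [partitionTerm, prod_insert ha, prod_mul_distrib]
  ring

lemma partitionTerm_erase (u : ι → K) (v : κ → K) (s : Finset κ) {w : α → K} {A S : Finset α}
    {p : α} (hw : Set.InjOn w A) (hSA : S ⊆ A) (hp : p ∈ A) (hpS : p ∉ S)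
    (hS : #S = Fintype.card ι) :
    partitionTerm u v s w A S * ∏ i ∈ S, (w i - w p) =
      (∏ j, (u j - w p)) * partitionTerm u v s w (A.erase p) S := by
  have hsplit : A \ S = insert p (A.erase p \ S) := by
    rw [erase_sdiff_comm, insert_erase (mem_sdiff.2 ⟨hp, hpS⟩)]
  have hp' : p ∉ A.erase p \ S := by simp
  have hflip : (∏ i ∈ S, (w i - w p)) * ∏ i ∈ S, (w p - w i)⁻¹ = (-1) ^ Fintype.card ι := by
    rw [← prod_mul_distrib, ← hS, ← prod_const]
    refine prod_congr rfl fun i hi => ?_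
    have hne : w p - w i ≠ 0 :=
      sub_ne_zero.2 (hw.ne hp (hSA hi) (ne_of_mem_of_not_mem hi hpS).symm)
    rw [← neg_sub, neg_mul, mul_inv_cancel₀ hne]
  have hsign : ∏ j, (u j - w p) = (-1) ^ Fintype.card ι * ∏ j, (w p - u j) := by
    rw [← card_univ, ← prod_neg]
    simp
  rw [partitionTerm, partitionTerm, hsplit, prod_insert hp', prod_insert hp', hsign, ← hflip]
  ring

lemma natDegree_prod_C_sub_X_le {β : Type*} (S : Finset β) (f : β → K) :
    (∏ i ∈ S, (C (f i) - X)).natDegree ≤ #S := by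
  refine (natDegree_prod_le _ _).trans ?_
  refine (sum_le_card_nsmul _ _ 1 fun i _ => (natDegree_sub_le _ _).trans ?_).trans (by simp)
  simp

lemma sum_partitionTerm_mul_prod_sub (u : ι → K) (v : κ → K) (s : Finset κ) {w : α → K}
    {A : Finset α} {p : α} (hw : Set.InjOn w A) (hp : p ∈ A) :
    ∑ S ∈ A.powersetCard (Fintype.card ι), partitionTerm u v s w A S * ∏ i ∈ S, (w i - w p) =
      (∏ j, (u j - w p)) *
        ∑ S ∈ (A.erase p).powersetCard (Fintype.card ι), partitionTerm u v s w (A.erase p) S := by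
  rw [mul_sum, ← sum_subset (powersetCard_mono (erase_subset p A))]
  · refine sum_congr rfl fun S hS => ?_
    obtain ⟨hSA, hS⟩ := mem_powersetCard.1 hS
    exact partitionTerm_erase u v s hw (hSA.trans (erase_subset p A)) hp
      (fun h => by simpa using hSA h) hS
  · intro S hS hSp
    obtain ⟨hSA, hS⟩ := mem_powersetCard.1 hS
    have hpS : p ∈ S := by
      by_contra hpS
      exact hSp (mem_powersetCard.2 ⟨subset_erase.2 ⟨hSA, hpS⟩, hS⟩)
    exact mul_eq_zero_of_right _ (prod_eq_zero hpS (sub_self _))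

theorem sum_partitionTerm (u : ι → K) (v : κ → K) (s : Finset κ) {w : α → K} {A : Finset α}
    (hw : Set.InjOn w A) (hA : #A = Fintype.card ι + #s) :
    ∑ S ∈ A.powersetCard (Fintype.card ι), partitionTerm u v s w A S =
      ∏ j, ∏ k ∈ s, (u j - v k) := by
  classical
  induction s using Finset.induction_on generalizing A with
  | empty =>
    rw [card_empty, add_zero] at hA
    simp [← hA, powersetCard_self, partitionTerm]
  | insert a s ha ih =>
    rw [card_insert_of_notMem ha] at hA
    set m := Fintype.card ι
    let P : K[X] :=
      ∑ S ∈ A.powersetCard m, C (partitionTerm u v s w A S) * ∏ i ∈ S, (C (w i) - X)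
    let Q : K[X] := (∏ j, (C (u j) - X)) * C (∏ j, ∏ k ∈ s, (u j - v k))
    have hdeg : ∀ R : K[X], R.natDegree ≤ m → R.degree < #A := fun R hR =>
      (degree_le_of_natDegree_le hR).trans_lt (by exact_mod_cast (by omega : m < #A))
    have hPQ : P = Q := by
      refine eq_of_degrees_lt_of_eval_index_eq A hw (hdeg _ ?_) (hdeg _ ?_) fun p hp => ?_
      · refine natDegree_sum_le_of_forall_le _ _ fun S hS => (natDegree_C_mul_le _ _).trans ?_
        exact (natDegree_prod_C_sub_X_le S w).trans (mem_powersetCard.1 hS).2.le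
      · exact (natDegree_mul_C_le _ _).trans ((natDegree_prod_C_sub_X_le _ u).trans (by simp [m]))
      simp only [P, Q, eval_finsetSum, eval_mul, eval_C, eval_prod, eval_sub, eval_X]
      rw [sum_partitionTerm_mul_prod_sub u v s hw hp, ih (hw.mono (by simp))]
      rw [card_erase_of_mem hp, hA]
      omega
    have hPQ_eval := congrArg (eval (v a)) hPQ
    simp only [P, Q, eval_finsetSum, eval_mul, eval_C, eval_prod, eval_sub, eval_X] at hPQ_eval
    simpa only [partitionTerm_insert u ha, prod_insert ha, prod_mul_distrib] using hPQ_eval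

theorem sum_powersetCard_prod_inv_sub (u : ι → K) (v : κ → K) (s : Finset κ) {w : α → K}
    {A : Finset α} (hw : Set.InjOn w A) (hwu : ∀ i ∈ A, ∀ j, w i ≠ u j)
    (hwv : ∀ i ∈ A, ∀ k ∈ s, w i ≠ v k) (hA : #A = Fintype.card ι + #s) :
    ∑ S ∈ A.powersetCard (Fintype.card ι),
        (∏ i ∈ S, ∏ j, (w i - u j)⁻¹) * (∏ i ∈ A \ S, ∏ k ∈ s, (w i - v k)⁻¹) *
          ∏ i ∈ A \ S, ∏ i' ∈ S, (w i - w i')⁻¹ =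
      (∏ i ∈ A, ∏ j, (w i - u j)⁻¹) * (∏ i ∈ A, ∏ k ∈ s, (w i - v k)⁻¹) *
        ∏ j, ∏ k ∈ s, (u j - v k) := by
  have ha : ∀ i ∈ A, ∏ j, (w i - u j) ≠ 0 := fun i hi =>
    prod_ne_zero_iff.2 fun j _ => sub_ne_zero.2 (hwu i hi j)
  have hb : ∀ i ∈ A, ∏ k ∈ s, (w i - v k) ≠ 0 := fun i hi =>
    prod_ne_zero_iff.2 fun k hk => sub_ne_zero.2 (hwv i hi k hk)
  rw [← sum_partitionTerm u v s hw hA, mul_sum]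
  refine sum_congr rfl fun S hS => ?_
  have hSA := (mem_powersetCard.1 hS).1
  have hsub : ∀ f : α → K, (∀ i ∈ A, f i ≠ 0) → ∀ T ⊆ A, ∏ i ∈ T, f i ≠ 0 :=
    fun f hf T hT => prod_ne_zero_iff.2 fun i hi => hf i (hT hi)
  simp only [partitionTerm, prod_inv_distrib, ← prod_sdiff hSA]
  field_simp [hsub _ ha S hSA, hsub _ ha _ sdiff_subset, hsub _ hb S hSA, hsub _ hb _ sdiff_subset]

end

lemma prod_prod_gg {β γ : Type*} (c : ℂ) (s : Finset β) (t : Finset γ) (f : β → ℂ) (g : γ → ℂ) :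
    ∏ i ∈ s, ∏ j ∈ t, gg c (f i) (g j) = c ^ (#s * #t) * ∏ i ∈ s, ∏ j ∈ t, (f i - g j)⁻¹ := by
  simp only [gg, div_eq_mul_inv, prod_mul_distrib, prod_const, ← pow_mul, mul_comm #t]

theorem sum_partitions_g_general (c : ℂ) (hc : c ≠ 0) (m1 m2 : ℕ)
    (u : Fin m1 → ℂ) (v : Fin m2 → ℂ) (w : Fin (m1 + m2) → ℂ)
    (hw : Function.Injective w)
    (hwu : ∀ i j, w i ≠ u j) (hwv : ∀ i j, w i ≠ v j) :
    ∑ S ∈ powersetCard m1 (univ : Finset (Fin (m1 + m2))),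
        (∏ i ∈ S, ∏ j, gg c (w i) (u j)) *
        (∏ i ∈ Sᶜ, ∏ j, gg c (w i) (v j)) *
        (∏ i ∈ Sᶜ, ∏ i' ∈ S, gg c (w i) (w i')) =
      (∏ i, ∏ j, gg c (w i) (u j)) * (∏ i, ∏ j, gg c (w i) (v j)) /
        (∏ j, ∏ k, gg c (u j) (v k)) := by
  have key := sum_powersetCard_prod_inv_sub u v univ (A := univ) hw.injOn
    (fun i _ j => hwu i j) (fun i _ k _ => hwv i k) (by simp)
  rw [Fintype.card_fin] at key
  calc _ = ∑ S ∈ powersetCard m1 univ, c ^ (m1 * m1 + m2 * m2 + m2 * m1) *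
        ((∏ i ∈ S, ∏ j, (w i - u j)⁻¹) * (∏ i ∈ univ \ S, ∏ k, (w i - v k)⁻¹) *
          ∏ i ∈ univ \ S, ∏ i' ∈ S, (w i - w i')⁻¹) := by
        refine sum_congr rfl fun S hS => ?_
        have hS : #S = m1 := (mem_powersetCard.1 hS).2
        have hSc : #(univ \ S) = m2 := by
          rw [← compl_eq_univ_sdiff, card_compl, Fintype.card_fin, hS]; omega
        simp only [prod_prod_gg, card_univ, Fintype.card_fin, hS, hSc, compl_eq_univ_sdiff]
        ring
    _ = _ := by
        rw [← mul_sum, key]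
        simp only [prod_prod_gg, card_univ, Fintype.card_fin, div_eq_mul_inv, mul_inv,
          prod_inv_distrib, inv_inv]
        field_simp
        ring

theorem sum_partitions_g (c : ℂ) (hc : c ≠ 0) (m1 m2 : ℕ)
    (u : Fin m1 → ℂ) (v : Fin m2 → ℂ) (w : Fin (m1 + m2) → ℂ)
    (hw : Function.Injective w)
    (hwu : ∀ i j, w i ≠ u j) (hwv : ∀ i j, w i ≠ v j)
    (huv : ∀ j k, u j ≠ v k) :
    ∑ S ∈ powersetCard m1 (univ : Finset (Fin (m1 + m2))),
        (∏ i ∈ S, ∏ j, gg c (w i) (u j)) *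
        (∏ i ∈ Sᶜ, ∏ j, gg c (w i) (v j)) *
        (∏ i ∈ Sᶜ, ∏ i' ∈ S, gg c (w i) (w i')) =
      (∏ i, ∏ j, gg c (w i) (u j)) * (∏ i, ∏ j, gg c (w i) (v j)) /
        (∏ j, ∏ k, gg c (u j) (v k)) :=
  sum_partitions_g_general c hc m1 m2 u v w hw hwu hwv
end
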